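/- Let f : ℝ^p → (0, ∞) be a continuous probability density (f > 0 everywhere and ∫_{ℝ^p} f(t) dt = 1), let C ⊂ ℝ^p be nonempty and compact, let B ∈ ℝ^{p×p}, and let Σ : ℝ^p → ℝ^{p×p} be continuous with Σ(z) invertible for every z. Define the Markov transition kernel P(z, A) = ∫_A f(Σ(z)^{-1}(t − Bᵀz))·|det Σ(z)|^{-1} dt for Borel sets A ⊆ ℝ^p. Then: (i) there exist δ > 0 and a Borel probability measure ν on ℝ^p such that P(z, A) ≥ δ·ν(A) for all z ∈ C and all Borel A (minorization); and (ii) if in addition C has positive Lebesgue measure, then P(z, C) > 0 for every z ∈ ℝ^p. -/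

import Mathlib

/-!
Since `f` is continuous and positive and `Σ` is continuous and invertible, the transition density
`(z, t) ↦ f(Σ(z)⁻¹(t - Bᵀz)) |det Σ(z)|⁻¹` is jointly continuous and positive, hence bounded below
by some `m > 0` on the compact set `C × K`, `K` the closed unit ball. Then `P(z, ·) ≥ m · vol(K ∩ ·)`
for `z ∈ C`, which is the minorization with `δ = m · vol K` and `ν` the uniform distribution
on `K`. Positivity of `P(z, C)` is the integral of a positive integrable function over a set of
positive measure.
-/

open MeasureTheory

/-- The one-step Markov transition probability of the chain
`Z_t = BᵀZ_{t-1} + Σ(Z_{t-1})η_t` with innovation density `f`: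
`P(z, A) = ∫_A f(Σ(z)⁻¹(t - Bᵀz))·|det Σ(z)|⁻¹ dt`. -/
noncomputable def varTransition {p : ℕ} (f : EuclideanSpace ℝ (Fin p) → ℝ)
    (B : Matrix (Fin p) (Fin p) ℝ) (S : EuclideanSpace ℝ (Fin p) → Matrix (Fin p) (Fin p) ℝ)
    (z : EuclideanSpace ℝ (Fin p)) (A : Set (EuclideanSpace ℝ (Fin p))) : ℝ :=
  ∫ t in A, f (Matrix.toEuclideanLin (S z)⁻¹ (t - Matrix.toEuclideanLin B.transpose z)) *
    |(S z).det|⁻¹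

open ProbabilityTheory

theorem MeasureTheory.Integrable.comp_linearMap_of_det_ne_zero {E F : Type*}
    [NormedAddCommGroup E] [NormedSpace ℝ E] [MeasurableSpace E] [BorelSpace E]
    [FiniteDimensional ℝ E] [NormedAddCommGroup F] {μ : Measure E} [μ.IsAddHaarMeasure]
    {g : E → F} (hg : Integrable g μ) {L : E →ₗ[ℝ] E} (hL : LinearMap.det L ≠ 0) :
    Integrable (g ∘ L) μ := by
  have hemb : MeasurableEmbedding L :=
    (LinearMap.equivOfDetNeZero L hL).toContinuousLinearEquiv.toHomeomorph.measurableEmbedding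
  rw [← hemb.integrable_map_iff, Measure.map_linearMap_addHaar_eq_smul_addHaar μ hL]
  exact hg.smul_measure ENNReal.ofReal_ne_top

theorem Continuous.matrix_nonsing_inv {X 𝕜 n : Type*} [TopologicalSpace X]
    [NontriviallyNormedField 𝕜] [Fintype n] [DecidableEq n] {A : X → Matrix n n 𝕜}
    (hA : Continuous A) (h : ∀ x, IsUnit (A x).det) : Continuous fun x => (A x)⁻¹ :=
  continuous_iff_continuousAt.2 fun x =>
    (continuousAt_matrix_inv _ (NormedRing.inverse_continuousAt (h x).unit)).comp hA.continuousAt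

theorem Continuous.toEuclideanLin_apply {X n : Type*} [TopologicalSpace X] [Fintype n]
    [DecidableEq n] {M : X → Matrix n n ℝ} {v : X → EuclideanSpace ℝ n} (hM : Continuous M)
    (hv : Continuous v) : Continuous fun x => Matrix.toEuclideanLin (M x) (v x) :=
  (PiLp.continuous_toLp 2 _).comp (hM.matrix_mulVec ((PiLp.continuous_ofLp 2 _).comp hv))

section KernelWithDensity

variable {α : Type*} [MeasurableSpace α] {μ : Measure α}

theorem setIntegral_pos_of_forall_mem_pos {g : α → ℝ} {s : Set α} (hs : MeasurableSet s)
    (hμs : 0 < μ s) (hg : IntegrableOn g s μ) (hpos : ∀ t ∈ s, 0 < g t) :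
    0 < ∫ t in s, g t ∂μ := by
  rw [setIntegral_pos_iff_support_of_nonneg_ae
    ((ae_restrict_iff' hs).2 (.of_forall fun t ht => (hpos t ht).le)) hg,
    Set.inter_eq_right.2 fun t ht => Function.mem_support.2 (hpos t ht).ne']
  exact hμs

theorem mul_measureReal_mul_cond_le_setIntegral {g : α → ℝ} {K A : Set α} {m : ℝ}
    (hK : MeasurableSet K) (hKfin : μ K ≠ ⊤) (hg : Integrable g μ) (hg_nonneg : 0 ≤ g)
    (hm : ∀ t ∈ K, m ≤ g t) (hA : MeasurableSet A) :
    m * μ.real K * (μ[|K]).real A ≤ ∫ t in A, g t ∂μ := by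
  have hcond : μ.real K * (μ[|K]).real A = μ.real (K ∩ A) := by
    simp only [measureReal_def, ← ENNReal.toReal_mul, mul_comm (μ K), cond_mul_eq_inter' hK hKfin]
  calc m * μ.real K * (μ[|K]).real A = m * μ.real (A ∩ K) := by
        rw [mul_assoc, hcond, Set.inter_comm]
    _ ≤ ∫ t in A ∩ K, g t ∂μ :=
        setIntegral_ge_of_const_le_real (hA.inter hK)
          (measure_inter_lt_top_of_right_ne_top hKfin).ne (fun t ht => hm t ht.2) hg.integrableOn
    _ ≤ ∫ t in A, g t ∂μ :=
        setIntegral_mono_set hg.integrableOn (.of_forall hg_nonneg) (.of_forall fun _ ht => ht.1)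

theorem exists_minorization_of_forall_le {X : Type*} {g : X → α → ℝ} {C : Set X} {K : Set α}
    {m : ℝ} (hK : MeasurableSet K) (hK0 : μ K ≠ 0) (hKfin : μ K ≠ ⊤) (hm : 0 < m)
    (hg : ∀ z ∈ C, Integrable (g z) μ) (hg_nonneg : ∀ z ∈ C, 0 ≤ g z)
    (hmin : ∀ z ∈ C, ∀ t ∈ K, m ≤ g z t) :
    ∃ δ : ℝ, 0 < δ ∧ ∃ ν : Measure α, IsProbabilityMeasure ν ∧
      ∀ z ∈ C, ∀ A : Set α, MeasurableSet A → δ * ν.real A ≤ ∫ t in A, g z t ∂μ :=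
  ⟨m * μ.real K, mul_pos hm (ENNReal.toReal_pos hK0 hKfin), μ[|K],
    cond_isProbabilityMeasure_of_finite hK0 hKfin, fun z hz _ hA =>
      mul_measureReal_mul_cond_le_setIntegral hK hKfin (hg z hz) (hg_nonneg z hz) (hmin z hz) hA⟩

end KernelWithDensity

section VarDensity

variable {p : ℕ} {f : EuclideanSpace ℝ (Fin p) → ℝ} {B : Matrix (Fin p) (Fin p) ℝ}
  {S : EuclideanSpace ℝ (Fin p) → Matrix (Fin p) (Fin p) ℝ}

noncomputable def varDensity (f : EuclideanSpace ℝ (Fin p) → ℝ) (B : Matrix (Fin p) (Fin p) ℝ)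
    (S : EuclideanSpace ℝ (Fin p) → Matrix (Fin p) (Fin p) ℝ) (z t : EuclideanSpace ℝ (Fin p)) :
    ℝ :=
  f (Matrix.toEuclideanLin (S z)⁻¹ (t - Matrix.toEuclideanLin B.transpose z)) * |(S z).det|⁻¹

theorem varTransition_eq_setIntegral_varDensity (z : EuclideanSpace ℝ (Fin p))
    (A : Set (EuclideanSpace ℝ (Fin p))) :
    varTransition f B S z A = ∫ t in A, varDensity f B S z t :=
  rfl

theorem varDensity_pos (hf_pos : ∀ t, 0 < f t) {z : EuclideanSpace ℝ (Fin p)}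
    (hS : IsUnit (S z).det) (t : EuclideanSpace ℝ (Fin p)) : 0 < varDensity f B S z t :=
  mul_pos (hf_pos _) (inv_pos.2 (abs_pos.2 hS.ne_zero))

theorem integrable_varDensity (hf : Integrable f) {z : EuclideanSpace ℝ (Fin p)}
    (hS : IsUnit (S z).det) : Integrable (varDensity f B S z) := by
  have hdet : LinearMap.det (Matrix.toEuclideanLin (S z)⁻¹) ≠ 0 := by
    rw [LinearMap.det_toLpLin]
    exact (S z).isUnit_nonsing_inv_det_iff.2 hS |>.ne_zero
  exact ((hf.comp_linearMap_of_det_ne_zero hdet).comp_sub_right _).mul_const _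

theorem continuous_varDensity (hf : Continuous f) (hS : Continuous S)
    (hS_inv : ∀ z, IsUnit (S z).det) :
    Continuous fun q : EuclideanSpace ℝ (Fin p) × EuclideanSpace ℝ (Fin p) =>
      varDensity f B S q.1 q.2 := by
  have hdet : Continuous fun z => |(S z).det|⁻¹ :=
    hS.matrix_det.abs.inv₀ fun z => abs_ne_zero.2 (hS_inv z).ne_zero
  have hshift : Continuous fun q : EuclideanSpace ℝ (Fin p) × EuclideanSpace ℝ (Fin p) =>
      q.2 - Matrix.toEuclideanLin B.transpose q.1 :=
    continuous_snd.sub (continuous_const.toEuclideanLin_apply continuous_fst)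
  exact (hf.comp (((hS.matrix_nonsing_inv hS_inv).comp continuous_fst).toEuclideanLin_apply
    hshift)).mul (hdet.comp continuous_fst)

end VarDensity

theorem varTransition_minorization_general {p : ℕ}
    (f : EuclideanSpace ℝ (Fin p) → ℝ) (hf_cont : Continuous f) (hf_pos : ∀ t, 0 < f t)
    (hf_int : (∫ t : EuclideanSpace ℝ (Fin p), f t) = 1)
    (C : Set (EuclideanSpace ℝ (Fin p))) (hC_cpt : IsCompact C)
    (B : Matrix (Fin p) (Fin p) ℝ)
    (S : EuclideanSpace ℝ (Fin p) → Matrix (Fin p) (Fin p) ℝ)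
    (hS_cont : ∀ i j, Continuous fun z => S z i j)
    (hS_inv : ∀ z, IsUnit (S z).det) :
    (∃ δ : ℝ, 0 < δ ∧ ∃ ν : Measure (EuclideanSpace ℝ (Fin p)), IsProbabilityMeasure ν ∧
      ∀ z ∈ C, ∀ A : Set (EuclideanSpace ℝ (Fin p)), MeasurableSet A →
        δ * (ν A).toReal ≤ varTransition f B S z A) ∧
    (0 < volume C → ∀ z : EuclideanSpace ℝ (Fin p), 0 < varTransition f B S z C) := by
  have hf : Integrable f := .of_integral_ne_zero (by rw [hf_int]; exact one_ne_zero)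
  have hpos z t : 0 < varDensity f B S z t := varDensity_pos hf_pos (hS_inv z) t
  have hint z : Integrable (varDensity f B S z) := integrable_varDensity hf (hS_inv z)
  have hcont := continuous_varDensity (B := B) hf_cont (continuous_matrix hS_cont) hS_inv
  obtain ⟨m, hm, hmin⟩ := (hC_cpt.prod (isCompact_closedBall 0 1)).exists_forall_le'
    hcont.continuousOn (a := 0) fun q _ => hpos q.1 q.2
  simp only [varTransition_eq_setIntegral_varDensity]
  refine ⟨?_, fun hC z => ?_⟩
  · exact exists_minorization_of_forall_le measurableSet_closedBall
      (Metric.measure_closedBall_pos volume 0 one_pos).ne' measure_closedBall_lt_top.ne hm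
      (fun z _ => hint z) (fun z _ t => (hpos z t).le) fun z hz t ht => hmin (z, t) ⟨hz, ht⟩
  · exact setIntegral_pos_of_forall_mem_pos hC_cpt.measurableSet hC (hint z).integrableOn
      fun t _ => hpos z t

/-- **Minorization over a compact set for the VAR transition kernel.**
If the innovation density `f` is continuous and everywhere positive, `C` is nonempty and
compact, and `Σ` is continuous with `Σ(z)` invertible for all `z`, then (i) there are `δ > 0`
and a Borel probability measure `ν` with `P(z, A) ≥ δ·ν(A)` for all `z ∈ C` and Borel `A`;
and (ii) if `C` has positive Lebesgue measure then `P(z, C) > 0` for every `z`. -/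
theorem varTransition_minorization {p : ℕ}
    (f : EuclideanSpace ℝ (Fin p) → ℝ) (hf_cont : Continuous f) (hf_pos : ∀ t, 0 < f t)
    (hf_int : (∫ t : EuclideanSpace ℝ (Fin p), f t) = 1)
    (C : Set (EuclideanSpace ℝ (Fin p))) (hC_ne : C.Nonempty) (hC_cpt : IsCompact C)
    (B : Matrix (Fin p) (Fin p) ℝ)
    (S : EuclideanSpace ℝ (Fin p) → Matrix (Fin p) (Fin p) ℝ)
    (hS_cont : ∀ i j, Continuous fun z => S z i j)
    (hS_inv : ∀ z, IsUnit (S z).det) :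
    (∃ δ : ℝ, 0 < δ ∧ ∃ ν : Measure (EuclideanSpace ℝ (Fin p)), IsProbabilityMeasure ν ∧
      ∀ z ∈ C, ∀ A : Set (EuclideanSpace ℝ (Fin p)), MeasurableSet A →
        δ * (ν A).toReal ≤ varTransition f B S z A) ∧
    (0 < volume C → ∀ z : EuclideanSpace ℝ (Fin p), 0 < varTransition f B S z C) :=
  varTransition_minorization_general f hf_cont hf_pos hf_int C hC_cpt B S hS_cont hS_inv
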